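/- Let V be a finite set of at least two points in ℝ^d in which all pairwise distances between distinct points are distinct, and let G be the underlying graph of the 1-nearest-neighbor digraph of V. Then the number of connected components of G equals R^{(1)}(V), the number of reflexive pairs of V. -/

import Mathlib

/-- All pairwise distances between distinct points of `V` are distinct. -/
def DistinctDists {d : ℕ} (V : Set (EuclideanSpace ℝ (Fin d))) : Prop :=
  ∀ u v u' v', u ∈ V → v ∈ V → u' ∈ V → v' ∈ V → u ≠ v → u' ≠ v' →
    dist u v = dist u' v' → (u = u' ∧ v = v') ∨ (u = v' ∧ v = u')

/-- `IsNN V v u` : `u` is the (unique) nearest neighbor of `v` in `V`, i.e. `NN(v) = u`. -/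
def IsNN {d : ℕ} (V : Set (EuclideanSpace ℝ (Fin d))) (v u : EuclideanSpace ℝ (Fin d)) : Prop :=
  u ∈ V ∧ u ≠ v ∧ ∀ w ∈ V, w ≠ v → w ≠ u → dist v u < dist v w

/-- The underlying graph of the 1-nearest-neighbor digraph of `V`: vertices are the points of
`V`, and `u`, `v` are adjacent iff `NN(u) = v` or `NN(v) = u`. -/
def nnGraph {d : ℕ} (V : Set (EuclideanSpace ℝ (Fin d))) : SimpleGraph V where
  Adj a b := IsNN V a.1 b.1 ∨ IsNN V b.1 a.1
  symm := ⟨fun a b h => Or.symm h⟩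
  loopless := ⟨fun a h => by
    rcases h with h | h <;> exact h.2.1 rfl⟩

/-- `R^{(1)}(V)`: the number of reflexive nearest-neighbor pairs of `V`. -/
noncomputable def reflCount {d : ℕ} (V : Set (EuclideanSpace ℝ (Fin d))) : ℕ :=
  {p : Sym2 (EuclideanSpace ℝ (Fin d)) | ∃ u v, p = s(u, v) ∧ u ≠ v ∧
    u ∈ V ∧ v ∈ V ∧ IsNN V u v ∧ IsNN V v u}.ncard

/-!
Since nearest neighbours are unique, the graph is the undirected functional graph of a map
`nn : V → V`. Along an orbit `a, nn a, nn (nn a), …` the distance `dist x (nn x)` strictly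
decreases until the orbit reaches a reflexive pair, so in a finite set every orbit ends in a
2-cycle `{b, nn b}`. This terminal 2-cycle is reachable from the point and does not change
along edges, so sending a component to it is a bijection onto the reflexive pairs.
-/

open Function SimpleGraph

namespace Function

variable {α : Type*} (f : α → α)

def functionalGraph : SimpleGraph α :=
  SimpleGraph.fromRel fun a b => f a = b

/-- Fixed points of `f` contribute diagonal pairs `s(a, a)`. -/
def twoCyclePairs : Set (Sym2 α) :=
  {p | ∃ a, IsPeriodicPt f 2 a ∧ p = s(a, f a)}

variable {f}

theorem functionalGraph_reachable_apply (a : α) : (functionalGraph f).Reachable a (f a) := by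
  by_cases h : a = f a
  · rw [← h]
  · exact Adj.reachable ⟨h, Or.inl rfl⟩

theorem functionalGraph_reachable_iterate (n : ℕ) (a : α) :
    (functionalGraph f).Reachable a (f^[n] a) := by
  induction n with
  | zero => rfl
  | succ n ih =>
    rw [iterate_succ_apply']
    exact ih.trans (functionalGraph_reachable_apply _)

theorem eq_of_functionalGraph_reachable {β : Type*} {Φ : α → β} (hΦ : ∀ a, Φ (f a) = Φ a)
    {a b : α} (h : (functionalGraph f).Reachable a b) : Φ a = Φ b := by
  rw [reachable_iff_reflTransGen] at h
  induction h with
  | refl => rfl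
  | tail _ hbc ih =>
    rcases hbc.2 with rfl | rfl
    · exact ih.trans (hΦ _).symm
    · exact ih.trans (hΦ _)

theorem IsPeriodicPt.sym2_iterate {b : α} (hb : IsPeriodicPt f 2 b) (k : ℕ) :
    s(f^[k] b, f (f^[k] b)) = s(b, f b) := by
  induction k with
  | zero => rfl
  | succ k ih =>
    rw [iterate_succ_apply', show f (f (f^[k] b)) = f^[k] b from hb.apply_iterate k,
      Sym2.eq_swap, ih]

variable (f) in
/-- Once every `f^[N] a` lies on a cycle of length at most two, this is the cycle in which the
orbit of `a` ends. -/
def terminalPair (N : ℕ) (a : α) : Sym2 α :=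
  s(f^[N] a, f (f^[N] a))

theorem terminalPair_of_isPeriodicPt {b : α} (hb : IsPeriodicPt f 2 b) (N : ℕ) :
    terminalPair f N b = s(b, f b) :=
  hb.sym2_iterate N

theorem functionalGraph_reachable_of_mem_terminalPair {N : ℕ} {a x : α}
    (hx : x ∈ terminalPair f N a) : (functionalGraph f).Reachable a x := by
  rcases Sym2.mem_iff.1 hx with rfl | rfl
  · exact functionalGraph_reachable_iterate N a
  · exact (functionalGraph_reachable_iterate N a).trans (functionalGraph_reachable_apply _)

section

variable {N : ℕ} (hN : ∀ a, IsPeriodicPt f 2 (f^[N] a))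
include hN

theorem terminalPair_apply (a : α) : terminalPair f N (f a) = terminalPair f N a := by
  rw [terminalPair, ← iterate_succ_apply, iterate_succ_apply']
  exact (hN a).sym2_iterate 1

theorem terminalPair_mem_twoCyclePairs (a : α) : terminalPair f N a ∈ twoCyclePairs f :=
  ⟨_, hN a, rfl⟩

def componentLimitPair : (functionalGraph f).ConnectedComponent → twoCyclePairs f :=
  let Φ (a : α) : twoCyclePairs f := ⟨terminalPair f N a, terminalPair_mem_twoCyclePairs hN a⟩
  ConnectedComponent.lift Φ fun _ _ p _ =>
    eq_of_functionalGraph_reachable (Φ := Φ) (fun a => Subtype.ext (terminalPair_apply hN a))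
      p.reachable

theorem componentLimitPair_bijective : Bijective (componentLimitPair hN) := by
  constructor
  · refine ConnectedComponent.ind₂ fun a b hab => ?_
    have hpair : terminalPair f N a = terminalPair f N b := congrArg Subtype.val hab
    have hmem : f^[N] a ∈ terminalPair f N b := hpair ▸ Sym2.mem_mk_left _ _
    exact ConnectedComponent.sound ((functionalGraph_reachable_iterate N a).trans
      (functionalGraph_reachable_of_mem_terminalPair hmem).symm)
  · rintro ⟨_, b, hb, rfl⟩
    exact ⟨connectedComponentMk _ b, Subtype.ext (terminalPair_of_isPeriodicPt hb N)⟩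

theorem card_connectedComponent_functionalGraph :
    Nat.card (functionalGraph f).ConnectedComponent = (twoCyclePairs f).ncard :=
  Nat.card_eq_of_bijective _ (componentLimitPair_bijective hN)

end

theorem exists_iterate_isPeriodicPt_two [Finite α] {β : Type*} [Preorder β] (D : α → β)
    (hD : ∀ a, ¬IsPeriodicPt f 2 a → D (f a) < D a) :
    ∃ N, ∀ a, IsPeriodicPt f 2 (f^[N] a) := by
  have hreach : ∀ a, ∃ n, IsPeriodicPt f 2 (f^[n] a) := by
    intro a
    by_contra! h
    -- `D` strictly decreases along the orbit, so the orbit is injective: impossible in `α`.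
    have hanti : StrictAnti fun n => D (f^[n] a) := strictAnti_nat_of_succ_lt fun n => by
      rw [iterate_succ_apply']
      exact hD _ (h n)
    exact not_injective_infinite_finite _ (hanti.injective.of_comp (f := D))
  choose n hn using hreach
  obtain ⟨N, hN⟩ := Finite.exists_le n
  refine ⟨N, fun a => ?_⟩
  rw [← Nat.sub_add_cancel (hN a), iterate_add_apply]
  exact (hn a).apply_iterate _

end Function

section NearestNeighbor

variable {d : ℕ} {V : Set (EuclideanSpace ℝ (Fin d))}

theorem IsNN.unique {v u u' : EuclideanSpace ℝ (Fin d)} (h : IsNN V v u) (h' : IsNN V v u') :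
    u = u' := by
  by_contra hne
  exact (h.2.2 u' h'.1 h'.2.1 (Ne.symm hne)).asymm (h'.2.2 u h.1 h.2.1 hne)

theorem IsNN.dist_lt {u v w : EuclideanSpace ℝ (Fin d)} (hv : v ∈ V) (hvu : IsNN V v u)
    (huw : IsNN V u w) (hwv : w ≠ v) : dist u w < dist v u := by
  rw [dist_comm v u]
  exact huw.2.2 v hv hvu.2.1.symm (Ne.symm hwv)

theorem exists_isNN (hfin : V.Finite) (hdist : DistinctDists V) {v : EuclideanSpace ℝ (Fin d)}
    (hv : v ∈ V) (hne : (V \ {v}).Nonempty) : ∃ u, IsNN V v u := by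
  obtain ⟨u, ⟨huV, huv⟩, hmin⟩ := (V \ {v}).exists_min_image (dist v) hfin.sdiff hne
  refine ⟨u, huV, huv, fun w hw hwv hwu => (hmin w ⟨hw, hwv⟩).lt_of_ne fun h => ?_⟩
  rcases hdist v u v w hv huV hv hw (Ne.symm huv) (Ne.symm hwv) h with ⟨-, rfl⟩ | ⟨rfl, -⟩
  · exact hwu rfl
  · exact hwv rfl

variable {nn : V → V} (hnn : ∀ a : V, IsNN V a (nn a))
include hnn

theorem isNN_iff_eq {a b : V} : IsNN V a b ↔ nn a = b :=
  ⟨fun h => Subtype.ext ((hnn a).unique h), by rintro rfl; exact hnn a⟩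

theorem nnGraph_eq_functionalGraph : nnGraph V = functionalGraph nn := by
  ext a b
  change IsNN V a b ∨ IsNN V b a ↔ a ≠ b ∧ (nn a = b ∨ nn b = a)
  rw [isNN_iff_eq hnn, isNN_iff_eq hnn]
  refine ⟨fun h => ⟨?_, h⟩, And.right⟩
  rintro rfl
  exact (hnn a).2.1 (by rcases h with h | h <;> rw [h])

theorem reflCount_eq_ncard_twoCyclePairs : reflCount V = (twoCyclePairs nn).ncard := by
  rw [reflCount, ← Set.ncard_image_of_injective _ (Sym2.map.injective Subtype.val_injective)]
  congr 1
  ext p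
  constructor
  · rintro ⟨u, v, rfl, -, hu, hv, huv, hvu⟩
    have h₁ : nn ⟨u, hu⟩ = ⟨v, hv⟩ := (isNN_iff_eq hnn).1 huv
    have h₂ : nn ⟨v, hv⟩ = ⟨u, hu⟩ := (isNN_iff_eq hnn).1 hvu
    refine ⟨s(⟨u, hu⟩, ⟨v, hv⟩), ⟨⟨u, hu⟩, ?_, by rw [h₁]⟩, rfl⟩
    change nn (nn _) = _
    rw [h₁, h₂]
  · rintro ⟨_, ⟨a, ha, rfl⟩, rfl⟩
    have hback : IsNN V (nn a) a := by
      simpa only [show nn (nn a) = a from ha] using hnn (nn a)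
    exact ⟨a, nn a, rfl, (hnn a).2.1.symm, a.2, (nn a).2, hnn a, hback⟩

end NearestNeighbor

/-- The number of connected components of the underlying graph of the 1NN digraph of `V`
equals the number of reflexive pairs of `V`. -/
theorem card_components_eq_reflCount (d : ℕ)
    (V : Set (EuclideanSpace ℝ (Fin d))) (hfin : V.Finite) (h2 : 2 ≤ V.ncard)
    (hdist : DistinctDists V) :
    Nat.card ((nnGraph V).ConnectedComponent) = reflCount V := by
  have : Finite V := hfin.to_subtype
  have hne (a : V) : (V \ {a.1}).Nonempty := by
    obtain ⟨b, hb, hba⟩ := Set.exists_ne_of_one_lt_ncard h2 a.1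
    exact ⟨b, hb, hba⟩
  have hex (a : V) : ∃ b : V, IsNN V a b :=
    let ⟨u, hu⟩ := exists_isNN hfin hdist a.2 (hne a)
    ⟨⟨u, hu.1⟩, hu⟩
  choose nn hnn using hex
  obtain ⟨N, hN⟩ := exists_iterate_isPeriodicPt_two (fun a : V => dist a.1 (nn a).1)
    fun a ha => (hnn a).dist_lt a.2 (hnn (nn a)) fun h => ha (Subtype.ext h)
  rw [nnGraph_eq_functionalGraph hnn, card_connectedComponent_functionalGraph hN,
    reflCount_eq_ncard_twoCyclePairs hnn]
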